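/- arXiv:1007.1250 — 2 statements merged into one kernel-verified Lean document; each statement's English description precedes it below -/
import Mathlib

section
/- Let f = ⊕_{i ≥ −1} f^i be a quantum type differential graded Lie algebra over ℝ, with differential d and bracket [−,−]. Let ω ∈ f¹ be a Maurer–Cartan element, i.e., d(ω) + ½[ω,ω] = 0. Define on h := f^{−1} the bilinear operation [β₁,β₂]_ω := [d(β₁) + [ω,β₁], β₂]. Then (h, [−,−]_ω) is a Lie algebra, and the map d_ω : h → f⁰ given by d_ω(β) := d(β) + [ω,β] is a Lie algebra homomorphism into f⁰ with its Lie bracket. -/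
namespace Stmt8

variable {L : Type*} [AddCommGroup L] [Module ℝ L]

/-- The twisted differential `d_ω(β) = d(β) + [ω, β]`. -/
def dOmega (br : L →ₗ[ℝ] L →ₗ[ℝ] L) (d : L →ₗ[ℝ] L) (ω β : L) : L :=
  d β + br ω β

/-- The twisted bracket `[β₁, β₂]_ω = [d(β₁) + [ω, β₁], β₂]`. -/
def brOmega (br : L →ₗ[ℝ] L →ₗ[ℝ] L) (d : L →ₗ[ℝ] L) (ω β₁ β₂ : L) : L :=
  br (dOmega br d ω β₁) β₂

end Stmt8

/-!
The twisted differential `d_ω = d + [ω, -]` squares to zero by the Maurer–Cartan equation and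
satisfies the graded Leibniz rule, since `[ω, -]` is a degree-one derivation by graded Jacobi.
As `[h, h] ⊆ f^{-2} = 0`, the Leibniz rule applied to `[β₁, β₂]` shows that `[-, -]_ω` is
antisymmetric, and applied to `[d_ω β₁, β₂]` that `d_ω` is a homomorphism. Hence
`[[β₁, β₂]_ω, β₃]_ω = [[d_ω β₁, d_ω β₂], β₃]`, which graded Jacobi in degree `0` turns into the
Leibniz identity `[[β₁, β₂]_ω, β₃]_ω = [β₁, [β₂, β₃]_ω]_ω - [β₂, [β₁, β₃]_ω]_ω`; together with
antisymmetry this is the Jacobi identity.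
-/

namespace Stmt8

structure IsGradedDGLieAlgebra {L : Type*} [AddCommGroup L] [Module ℝ L]
    (deg : ℤ → Submodule ℝ L) (br : L →ₗ[ℝ] L →ₗ[ℝ] L) (d : L →ₗ[ℝ] L) : Prop where
  br_mem : ∀ (i j : ℤ) (x y : L), x ∈ deg i → y ∈ deg j → br x y ∈ deg (i + j)
  d_mem : ∀ (i : ℤ) (x : L), x ∈ deg i → d x ∈ deg (i + 1)
  d_d : ∀ x : L, d (d x) = 0
  br_antisymm : ∀ (i j : ℤ) (x y : L), x ∈ deg i → y ∈ deg j →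
    br x y = -((-1 : ℝ) ^ (i * j)) • br y x
  jacobi : ∀ (i j : ℤ) (x y z : L), x ∈ deg i → y ∈ deg j →
    br x (br y z) = br (br x y) z + ((-1 : ℝ) ^ (i * j)) • br y (br x z)
  leibniz : ∀ (i : ℤ) (x y : L), x ∈ deg i →
    d (br x y) = br (d x) y + ((-1 : ℝ) ^ i) • br x (d y)

namespace IsGradedDGLieAlgebra

variable {L : Type*} [AddCommGroup L] [Module ℝ L] {deg : ℤ → Submodule ℝ L}
  {br : L →ₗ[ℝ] L →ₗ[ℝ] L} {d : L →ₗ[ℝ] L} {ω : L}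

theorem br_eq_zero_of_mem_neg_one (hL : IsGradedDGLieAlgebra deg br d)
    (hquantum : ∀ i : ℤ, i < -1 → deg i = ⊥) {x y : L} (hx : x ∈ deg (-1))
    (hy : y ∈ deg (-1)) : br x y = 0 := by
  have h := hL.br_mem _ _ x y hx hy
  rwa [hquantum _ (by norm_num), Submodule.mem_bot] at h

theorem dOmega_mem (hL : IsGradedDGLieAlgebra deg br d) (hω : ω ∈ deg 1) {i : ℤ} {x : L}
    (hx : x ∈ deg i) : dOmega br d ω x ∈ deg (i + 1) :=
  add_mem (hL.d_mem i x hx) (by simpa [add_comm] using hL.br_mem 1 i ω x hω hx)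

theorem brOmega_mem (hL : IsGradedDGLieAlgebra deg br d) (hω : ω ∈ deg 1) {i j : ℤ}
    {x y : L} (hx : x ∈ deg i) (hy : y ∈ deg j) : brOmega br d ω x y ∈ deg (i + 1 + j) :=
  hL.br_mem _ _ _ _ (hL.dOmega_mem hω hx) hy

theorem dOmega_br (hL : IsGradedDGLieAlgebra deg br d) (hω : ω ∈ deg 1) {i : ℤ} {x : L}
    (y : L) (hx : x ∈ deg i) :
    dOmega br d ω (br x y) =
      br (dOmega br d ω x) y + ((-1 : ℝ) ^ i) • br x (dOmega br d ω y) := by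
  have hleib := hL.leibniz i x y hx
  have hjac := hL.jacobi 1 i ω x y hω hx
  rw [one_mul] at hjac
  simp only [dOmega, map_add, LinearMap.add_apply]
  linear_combination (norm := module) hleib + hjac

theorem dOmega_dOmega (hL : IsGradedDGLieAlgebra deg br d) (hω : ω ∈ deg 1)
    (hMC : d ω + (2 : ℝ)⁻¹ • br ω ω = 0) (x : L) :
    dOmega br d ω (dOmega br d ω x) = 0 := by
  have hleib := hL.leibniz 1 ω x hω
  -- graded Jacobi gives `[ω, [ω, x]] = ½ [[ω, ω], x]`
  have hjac := hL.jacobi 1 1 ω ω x hω hω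
  have hMC_x : br (d ω) x + (2 : ℝ)⁻¹ • br (br ω ω) x = 0 := by
    simpa using congrArg (fun z => br z x) hMC
  norm_num at hleib hjac
  simp only [dOmega, map_add]
  linear_combination (norm := module) hL.d_d x + hleib + hMC_x + (2 : ℝ)⁻¹ • hjac

theorem dOmega_brOmega (hL : IsGradedDGLieAlgebra deg br d) (hω : ω ∈ deg 1)
    (hMC : d ω + (2 : ℝ)⁻¹ • br ω ω = 0) {i : ℤ} {x : L} (y : L) (hx : x ∈ deg i) :
    dOmega br d ω (brOmega br d ω x y) =
      ((-1 : ℝ) ^ (i + 1)) • br (dOmega br d ω x) (dOmega br d ω y) := by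
  rw [brOmega, hL.dOmega_br hω y (hL.dOmega_mem hω hx), hL.dOmega_dOmega hω hMC,
    map_zero, LinearMap.zero_apply, zero_add]

theorem brOmega_antisymm (hL : IsGradedDGLieAlgebra deg br d)
    (hquantum : ∀ i : ℤ, i < -1 → deg i = ⊥) (hω : ω ∈ deg 1) {x y : L}
    (hx : x ∈ deg (-1)) (hy : y ∈ deg (-1)) :
    brOmega br d ω x y = -brOmega br d ω y x := by
  have hleib := hL.dOmega_br hω y hx
  have hanti := hL.br_antisymm (-1) 0 x (dOmega br d ω y) hx
    (by simpa using hL.dOmega_mem hω hy)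
  rw [hL.br_eq_zero_of_mem_neg_one hquantum hx hy, dOmega, map_zero, map_zero, add_zero] at hleib
  norm_num at hleib hanti
  rw [brOmega, brOmega]
  linear_combination (norm := module) hanti - hleib

theorem brOmega_brOmega_left (hL : IsGradedDGLieAlgebra deg br d) (hω : ω ∈ deg 1)
    (hMC : d ω + (2 : ℝ)⁻¹ • br ω ω = 0) {x y : L} (z : L) (hx : x ∈ deg (-1))
    (hy : y ∈ deg (-1)) :
    brOmega br d ω (brOmega br d ω x y) z =
      brOmega br d ω x (brOmega br d ω y z) - brOmega br d ω y (brOmega br d ω x z) := by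
  have hjac := hL.jacobi 0 0 _ _ z (by simpa using hL.dOmega_mem hω hx)
    (by simpa using hL.dOmega_mem hω hy)
  rw [brOmega, hL.dOmega_brOmega hω hMC y hx]
  norm_num at hjac ⊢
  simp only [brOmega]
  linear_combination (norm := module) -hjac

theorem brOmega_jacobi (hL : IsGradedDGLieAlgebra deg br d)
    (hquantum : ∀ i : ℤ, i < -1 → deg i = ⊥) (hω : ω ∈ deg 1)
    (hMC : d ω + (2 : ℝ)⁻¹ • br ω ω = 0) {x y z : L} (hx : x ∈ deg (-1))
    (hy : y ∈ deg (-1)) (hz : z ∈ deg (-1)) :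
    brOmega br d ω (brOmega br d ω x y) z + brOmega br d ω (brOmega br d ω y z) x +
      brOmega br d ω (brOmega br d ω z x) y = 0 := by
  have hmem : ∀ {a b : L}, a ∈ deg (-1) → b ∈ deg (-1) → brOmega br d ω a b ∈ deg (-1) :=
    fun ha hb => by simpa using hL.brOmega_mem hω ha hb
  have h_xz :
      brOmega br d ω y (brOmega br d ω x z) = -brOmega br d ω y (brOmega br d ω z x) := by
    rw [hL.brOmega_antisymm hquantum hω hx hz, brOmega, map_neg, ← brOmega]
  rw [hL.brOmega_brOmega_left hω hMC z hx hy, h_xz,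
    hL.brOmega_antisymm hquantum hω hx (hmem hy hz),
    hL.brOmega_antisymm hquantum hω hy (hmem hz hx)]
  abel

end IsGradedDGLieAlgebra

end Stmt8

open Stmt8 in
/-- **The twisted bracket of a Maurer–Cartan element on the degree `−1` part of a quantum
type DG Lie algebra is a Lie bracket, and `d_ω` is a Lie algebra homomorphism.**
The quantum type DG Lie algebra `f = ⊕_{i ≥ −1} fⁱ` is encoded as an ℝ-module `L` with a
grading by submodules `deg i` (vanishing for `i < −1`), a bilinear bracket `br` of degree
`0`, a differential `d` of degree `1` with `d² = 0`, satisfying graded antisymmetry, graded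
Jacobi, and the graded Leibniz rule.  Let `ω ∈ f¹` satisfy the Maurer–Cartan equation
`d(ω) + ½[ω,ω] = 0`, and on `h = f^{−1}` define `[β₁,β₂]_ω := [d(β₁)+[ω,β₁], β₂]` and
`d_ω(β) := d(β)+[ω,β]`.  Then `[−,−]_ω` maps `h × h` to `h`, it is antisymmetric and
satisfies the Jacobi identity (so `(h, [−,−]_ω)` is a Lie algebra, bilinearity being
automatic), and `d_ω : h → f⁰` is a homomorphism of Lie algebras into `f⁰` with its
bracket. -/
theorem stmt_8 {L : Type*} [AddCommGroup L] [Module ℝ L]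
    (deg : ℤ → Submodule ℝ L)
    (br : L →ₗ[ℝ] L →ₗ[ℝ] L) (d : L →ₗ[ℝ] L)
    (hquantum : ∀ i : ℤ, i < -1 → deg i = ⊥)
    (hbr : ∀ (i j : ℤ) (x y : L), x ∈ deg i → y ∈ deg j → br x y ∈ deg (i + j))
    (hd : ∀ (i : ℤ) (x : L), x ∈ deg i → d x ∈ deg (i + 1))
    (hd2 : ∀ x : L, d (d x) = 0)
    (hanti : ∀ (i j : ℤ) (x y : L), x ∈ deg i → y ∈ deg j →
      br x y = -((-1 : ℝ) ^ (i * j)) • br y x)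
    (hjac : ∀ (i j : ℤ) (x y z : L), x ∈ deg i → y ∈ deg j →
      br x (br y z) = br (br x y) z + ((-1 : ℝ) ^ (i * j)) • br y (br x z))
    (hleib : ∀ (i : ℤ) (x y : L), x ∈ deg i →
      d (br x y) = br (d x) y + ((-1 : ℝ) ^ i) • br x (d y))
    (ω : L) (hω : ω ∈ deg 1)
    (hMC : d ω + (2 : ℝ)⁻¹ • br ω ω = 0) :
    (∀ β₁ β₂ : L, β₁ ∈ deg (-1) → β₂ ∈ deg (-1) →
      brOmega br d ω β₁ β₂ ∈ deg (-1)) ∧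
    (∀ β₁ β₂ : L, β₁ ∈ deg (-1) → β₂ ∈ deg (-1) →
      brOmega br d ω β₁ β₂ = -brOmega br d ω β₂ β₁) ∧
    (∀ β₁ β₂ β₃ : L, β₁ ∈ deg (-1) → β₂ ∈ deg (-1) → β₃ ∈ deg (-1) →
      brOmega br d ω (brOmega br d ω β₁ β₂) β₃ +
        brOmega br d ω (brOmega br d ω β₂ β₃) β₁ +
          brOmega br d ω (brOmega br d ω β₃ β₁) β₂ = 0) ∧
    (∀ β : L, β ∈ deg (-1) → dOmega br d ω β ∈ deg 0) ∧
    (∀ β₁ β₂ : L, β₁ ∈ deg (-1) → β₂ ∈ deg (-1) →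
      dOmega br d ω (brOmega br d ω β₁ β₂) =
        br (dOmega br d ω β₁) (dOmega br d ω β₂)) := by
  have hL : IsGradedDGLieAlgebra deg br d := ⟨hbr, hd, hd2, hanti, hjac, hleib⟩
  refine ⟨fun β₁ β₂ h₁ h₂ => by simpa using hL.brOmega_mem hω h₁ h₂,
    fun β₁ β₂ h₁ h₂ => hL.brOmega_antisymm hquantum hω h₁ h₂,
    fun β₁ β₂ β₃ h₁ h₂ h₃ => hL.brOmega_jacobi hquantum hω hMC h₁ h₂ h₃,
    fun β h => by simpa using hL.dOmega_mem hω h,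
    fun β₁ β₂ h₁ _ => by simpa using hL.dOmega_brOmega hω hMC β₂ h₁⟩
end

section
/- Let (G, H, Ψ, Φ₀) be a Lie quasi crossed module and g ∈ G. Define a new multiplication on the underlying manifold of H by h₁ ·^g h₂ := Ψ(g)⁻¹(Ψ(g)(h₁)·Ψ(g)(h₂)), yielding a Lie group H^g, and define Φ₀^g : H^g → G by Φ₀^g := Ad_G(g)⁻¹ ∘ Φ₀ ∘ Ψ(g). Then (G, H^g, Ψ, Φ₀^g) is again a Lie quasi crossed module; in particular Ψ ∘ Φ₀^g = Ad_{H^g}. -/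
/-!
`H^g` is the group structure of `H` transported along the bijection `Ψ g`, so every identity in
`H^g` becomes, after applying `Ψ g`, the corresponding identity in `H`. For the Pfeiffer condition
one uses in addition that `Ψ` turns conjugation by `g⁻¹` in `G` into conjugation by `Ψ g` in
`Equiv.Perm H`.
-/

namespace Stmt12

variable {G H : Type*} [Group G] [Group H]

/-- The twisted multiplication `h₁ ·^g h₂ := Ψ(g)⁻¹(Ψ(g)(h₁)·Ψ(g)(h₂))` on `H`. -/
def mulg (Ψ : G →* Equiv.Perm H) (g : G) (h₁ h₂ : H) : H :=
  (Ψ g).symm (Ψ g h₁ * Ψ g h₂)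

/-- The twisted inversion on `H^g`. -/
def invg (Ψ : G →* Equiv.Perm H) (g : G) (h : H) : H :=
  (Ψ g).symm (Ψ g h)⁻¹

/-- The twisted multiplicative feedback `Φ₀^g := Ad_G(g)⁻¹ ∘ Φ₀ ∘ Ψ(g)`. -/
def phig (Ψ : G →* Equiv.Perm H) (Φ₀ : H →* G) (g : G) (h : H) : G :=
  g⁻¹ * Φ₀ (Ψ g h) * g

end Stmt12

theorem MonoidHom.perm_conj_apply {G H : Type*} [Group G] (Ψ : G →* Equiv.Perm H) (g k : G)
    (x : H) : Ψ (g⁻¹ * k * g) x = (Ψ g).symm (Ψ k (Ψ g x)) := by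
  rw [map_mul, map_mul, map_inv, Equiv.Perm.mul_apply, Equiv.Perm.mul_apply, Equiv.Perm.inv_def]

namespace Stmt12

variable {G H : Type*} [Group G] [Group H] (Ψ : G →* Equiv.Perm H) (g : G)

theorem apply_mulg (h₁ h₂ : H) : Ψ g (mulg Ψ g h₁ h₂) = Ψ g h₁ * Ψ g h₂ :=
  Equiv.apply_symm_apply _ _

theorem apply_invg (h : H) : Ψ g (invg Ψ g h) = (Ψ g h)⁻¹ :=
  Equiv.apply_symm_apply _ _

theorem mulg_assoc (h₁ h₂ h₃ : H) :
    mulg Ψ g (mulg Ψ g h₁ h₂) h₃ = mulg Ψ g h₁ (mulg Ψ g h₂ h₃) :=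
  (Ψ g).injective <| by simp only [apply_mulg, mul_assoc]

variable {Ψ}

theorem one_mulg (hg : Ψ g 1 = 1) (h : H) : mulg Ψ g 1 h = h :=
  (Ψ g).injective <| by rw [apply_mulg, hg, one_mul]

theorem mulg_one (hg : Ψ g 1 = 1) (h : H) : mulg Ψ g h 1 = h :=
  (Ψ g).injective <| by rw [apply_mulg, hg, mul_one]

theorem mulg_invg (hg : Ψ g 1 = 1) (h : H) : mulg Ψ g h (invg Ψ g h) = 1 :=
  (Ψ g).injective <| by rw [apply_mulg, apply_invg, mul_inv_cancel, hg]

theorem phig_mulg (Φ₀ : H →* G) (h₁ h₂ : H) :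
    phig Ψ Φ₀ g (mulg Ψ g h₁ h₂) = phig Ψ Φ₀ g h₁ * phig Ψ Φ₀ g h₂ := by
  simp only [phig, apply_mulg, map_mul]
  group

theorem apply_phig {Φ₀ : H →* G} (hPf : ∀ h x : H, Ψ (Φ₀ h) x = h * x * h⁻¹) (h x : H) :
    Ψ (phig Ψ Φ₀ g h) x = mulg Ψ g h (mulg Ψ g x (invg Ψ g h)) := by
  rw [phig, Ψ.perm_conj_apply, hPf, Equiv.symm_apply_eq, apply_mulg, apply_mulg, apply_invg,
    mul_assoc]

end Stmt12

/-- **Moving the base point: `(G, H^g, Ψ, Φ₀^g)` is again a Lie quasi crossed module.**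
A Lie quasi crossed module `(G, H, Ψ, Φ₀)` is encoded by: groups `G`, `H`, an action
`Ψ : G →* Equiv.Perm H` of `G` on `H` by automorphisms of the pointed manifold `(H, 1)`
(each `Ψ g` fixes `1`), a homomorphism `Φ₀ : H →* G`, and the Pfeiffer condition
`Ψ ∘ Φ₀ = Ad_H`.  For `g ∈ G`, the twisted multiplication makes `H^g` a group (with the
same unit `1` and with inverse `invg`), `Φ₀^g : H^g → G` is a group homomorphism, and the
Pfeiffer condition `Ψ ∘ Φ₀^g = Ad_{H^g}` holds. -/
theorem stmt_12 {G H : Type*} [Group G] [Group H]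
    (Ψ : G →* Equiv.Perm H) (Φ₀ : H →* G)
    (hfix : ∀ g : G, Ψ g 1 = 1)
    (hPf : ∀ h x : H, Ψ (Φ₀ h) x = h * x * h⁻¹)
    (g : G) :
    (∀ h₁ h₂ h₃ : H, Stmt12.mulg Ψ g (Stmt12.mulg Ψ g h₁ h₂) h₃ =
      Stmt12.mulg Ψ g h₁ (Stmt12.mulg Ψ g h₂ h₃)) ∧
    (∀ h : H, Stmt12.mulg Ψ g 1 h = h ∧ Stmt12.mulg Ψ g h 1 = h) ∧
    (∀ h : H, Stmt12.mulg Ψ g h (Stmt12.invg Ψ g h) = 1) ∧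
    (∀ h₁ h₂ : H, Stmt12.phig Ψ Φ₀ g (Stmt12.mulg Ψ g h₁ h₂) =
      Stmt12.phig Ψ Φ₀ g h₁ * Stmt12.phig Ψ Φ₀ g h₂) ∧
    (∀ h x : H, Ψ (Stmt12.phig Ψ Φ₀ g h) x =
      Stmt12.mulg Ψ g h (Stmt12.mulg Ψ g x (Stmt12.invg Ψ g h))) :=
  ⟨Stmt12.mulg_assoc Ψ g,
    fun h => ⟨Stmt12.one_mulg g (hfix g) h, Stmt12.mulg_one g (hfix g) h⟩,
    Stmt12.mulg_invg g (hfix g), Stmt12.phig_mulg g Φ₀, Stmt12.apply_phig g hPf⟩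
end
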